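/- arXiv:2008.03133 — 3 statements merged into one kernel-verified Lean document; each statement's English description precedes it below -/
import Mathlib

section
/- Let Y be a finite nonempty set and let D be a set of extended real variables on Y containing all bounded below ones. A map E̅ : D → ℝ̄ is an upper expectation on D if and only if it satisfies (E1)–(E4) together with (E13): E̅((+∞)·f) = (+∞)·E̅(f) for every non-negative bounded below extended real variable f on Y, where multiplication by +∞ is given by (+∞)·x := +∞ if x > 0 and (+∞)·0 := 0, applied pointwise to f on the left-hand side and to the value E̅(f) on the right-hand side. -/
open Filter Topology

noncomputable section

/-- Addition on the extended reals with the convention `(+∞) + (−∞) = (−∞) + (+∞) = +∞`. -/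
def eadd (a b : EReal) : EReal := if a = ⊤ ∨ b = ⊤ then ⊤ else a + b

/-- An extended real variable is bounded below. -/
def BddBelowF {Y : Type*} (f : Y → EReal) : Prop := ∃ M : ℝ, ∀ y, (M : EReal) ≤ f y

/-- (E1): constants are preserved. -/
def UE1 {Y : Type*} (E : (Y → EReal) → EReal) : Prop :=
  ∀ c : ℝ, E (fun _ => (c : EReal)) = (c : EReal)

/-- (E2): sub-additivity on bounded below variables. -/
def UE2 {Y : Type*} (E : (Y → EReal) → EReal) : Prop :=
  ∀ f g : Y → EReal, BddBelowF f → BddBelowF g →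
    E (fun y => eadd (f y) (g y)) ≤ eadd (E f) (E g)

/-- (E3): positive homogeneity on bounded below variables. -/
def UE3 {Y : Type*} (E : (Y → EReal) → EReal) : Prop :=
  ∀ l : ℝ, 0 < l → ∀ f : Y → EReal, BddBelowF f →
    E (fun y => (l : EReal) * f y) = (l : EReal) * E f

/-- (E4): monotonicity on bounded below variables. -/
def UE4 {Y : Type*} (E : (Y → EReal) → EReal) : Prop :=
  ∀ f g : Y → EReal, BddBelowF f → BddBelowF g → (∀ y, f y ≤ g y) → E f ≤ E g

/-- (E5): continuity with respect to non-decreasing sequences of non-negative variables. -/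
def UE5 {Y : Type*} (E : (Y → EReal) → EReal) : Prop :=
  ∀ (fs : ℕ → Y → EReal) (f : Y → EReal),
    (∀ n y, 0 ≤ fs n y) → (∀ n y, fs n y ≤ fs (n + 1) y) →
    (∀ y, Tendsto (fun n => fs n y) atTop (𝓝 (f y))) →
    Tendsto (fun n => E (fs n)) atTop (𝓝 (E f))

/-- An upper expectation: a map satisfying (E1)–(E5). -/
def IsUpperExpectation {Y : Type*} (E : (Y → EReal) → EReal) : Prop :=
  UE1 E ∧ UE2 E ∧ UE3 E ∧ UE4 E ∧ UE5 E

/-! Applying (E5) to `n • f ↑ (+∞) • f` gives (E13), since `E̅ (n • f) = n • E̅ f` by (E1) and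
(E3). Conversely, let `0 ≤ fₙ ↑ f` on a finite set and `L = sup E̅ fₙ`. Split
`f ≤ h + (+∞) • 1_{f = +∞}` with `h` real-valued. On finitely many points, every real-valued
`u ≤ f` lies below `fₙ + ε` for large `n`, so `E̅ u ≤ L`; this gives `E̅ h ≤ L` and
`n · E̅ 1_{f = +∞} ≤ L` for all `n`. By (E2) and (E13),
`E̅ f ≤ E̅ h + (+∞) · E̅ 1_{f = +∞} ≤ L`, and (E4) gives the reverse inequality. -/

lemma eadd_coe (a : EReal) (c : ℝ) : eadd a c = a + c := by
  unfold eadd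
  split_ifs with h
  · rcases h with rfl | h
    · exact (EReal.top_add_coe c).symm
    · exact absurd h (EReal.coe_ne_top c)
  · rfl

lemma eadd_zero (a : EReal) : eadd a 0 = a := by simpa using eadd_coe a 0

lemma eadd_top (a : EReal) : eadd a ⊤ = ⊤ := if_pos (Or.inr rfl)

lemma eadd_top_mul_le {a b c : EReal} (ha : a ≤ c) (hb : ⊤ * b ≤ c) : eadd a (⊤ * b) ≤ c := by
  rcases lt_trichotomy b 0 with hb0 | rfl | hb0
  · rw [EReal.top_mul_of_neg hb0]
    unfold eadd
    split_ifs with h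
    · rcases h with rfl | h
      · exact ha
      · exact absurd h bot_ne_top
    · simp
  · rwa [mul_zero, eadd_zero]
  · rw [EReal.top_mul_of_pos hb0, eadd_top]
    rwa [EReal.top_mul_of_pos hb0] at hb

lemma EReal.le_of_forall_pos_le_add_coe {a b : EReal} (h : ∀ ε : ℝ, 0 < ε → a ≤ b + ε) :
    a ≤ b := by
  have hlim : Tendsto (fun ε : ℝ => b + ε) (𝓝[>] 0) (𝓝 (b + (0 : ℝ))) :=
    (EReal.continuousAt_add (by simp) (by simp)).tendsto.comp
      (tendsto_const_nhds.prodMk_nhds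
        ((continuous_coe_real_ereal.tendsto 0).mono_left nhdsWithin_le_nhds))
  simpa using ge_of_tendsto hlim (eventually_nhdsWithin_of_forall h)

lemma EReal.tendsto_natCast_mul_top_mul (a : EReal) :
    Tendsto (fun n : ℕ => ((n : ℝ) : EReal) * a) atTop (𝓝 (⊤ * a)) := by
  rcases eq_or_ne a 0 with rfl | ha
  · simp
  · exact (EReal.continuousAt_mul (by simp) (by simp) (by simp) (Or.inr ha)).tendsto.comp
      ((EReal.tendsto_coe_nhds_top_iff.2 tendsto_natCast_atTop_atTop).prodMk_nhds
        tendsto_const_nhds)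

section UpperExpectation

variable {Y : Type*} {E : (Y → EReal) → EReal}

lemma BddBelowF.mono {f g : Y → EReal} (hf : BddBelowF f) (hfg : ∀ y, f y ≤ g y) :
    BddBelowF g :=
  let ⟨M, hM⟩ := hf
  ⟨M, fun y => (hM y).trans (hfg y)⟩

lemma BddBelowF.of_nonneg {f : Y → EReal} (hf : ∀ y, 0 ≤ f y) : BddBelowF f :=
  ⟨0, by simpa using hf⟩

lemma BddBelowF.coe [Finite Y] (u : Y → ℝ) : BddBelowF fun y => (u y : EReal) :=
  let ⟨M, hM⟩ := (Set.finite_range u).bddBelow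
  ⟨M, fun y => EReal.coe_le_coe_iff.2 (hM ⟨y, rfl⟩)⟩

lemma UE3.natCast_mul (h3 : UE3 E) (h1 : UE1 E) {f : Y → EReal} (hf : BddBelowF f) (n : ℕ) :
    E (fun y => ((n : ℝ) : EReal) * f y) = ((n : ℝ) : EReal) * E f := by
  cases n with
  | zero => simpa using h1 0
  | succ n => exact h3 _ (by positivity) f hf

lemma le_add_coe_of_le_add_coe (h1 : UE1 E) (h2 : UE2 E) (h4 : UE4 E) {f g : Y → EReal}
    (hf : BddBelowF f) (hg : BddBelowF g) (c : ℝ) (hgf : ∀ y, g y ≤ f y + c) :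
    E g ≤ E f + c := by
  have hgf' : ∀ y, g y ≤ eadd (f y) c := fun y => (eadd_coe _ c).symm ▸ hgf y
  calc E g ≤ E (fun y => eadd (f y) c) := h4 _ _ hg (hg.mono hgf') hgf'
    _ ≤ eadd (E f) (E fun _ => (c : EReal)) := h2 _ _ hf ⟨c, fun _ => le_rfl⟩
    _ = E f + c := by rw [h1, eadd_coe]

lemma IsUpperExpectation.map_top_mul (hE : IsUpperExpectation E) {f : Y → EReal}
    (hf : BddBelowF f) (hf0 : ∀ y, 0 ≤ f y) :
    E (fun y => ⊤ * f y) = ⊤ * E f := by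
  obtain ⟨h1, -, h3, -, h5⟩ := hE
  have hlim := h5 (fun n y => ((n : ℝ) : EReal) * f y) (fun y => ⊤ * f y)
    (fun n y => mul_nonneg (by exact_mod_cast n.cast_nonneg) (hf0 y))
    (fun n y => mul_le_mul_of_nonneg_right (by exact_mod_cast n.cast_le.2 n.le_succ) (hf0 y))
    (fun y => EReal.tendsto_natCast_mul_top_mul (f y))
  simp only [h3.natCast_mul h1 hf] at hlim
  exact tendsto_nhds_unique hlim (EReal.tendsto_natCast_mul_top_mul (E f))

lemma le_iSup_of_coe_le_tendsto [Finite Y] (h1 : UE1 E) (h2 : UE2 E) (h4 : UE4 E)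
    {fs : ℕ → Y → EReal} {f : Y → EReal} (hfs : ∀ n, BddBelowF (fs n))
    (hlim : ∀ y, Tendsto (fun n => fs n y) atTop (𝓝 (f y)))
    {u : Y → ℝ} (hu : ∀ y, (u y : EReal) ≤ f y) :
    E (fun y => (u y : EReal)) ≤ ⨆ n, E (fs n) := by
  refine EReal.le_of_forall_pos_le_add_coe fun ε hε => ?_
  obtain ⟨n, hn⟩ : ∃ n, ∀ y, ((u y - ε : ℝ) : EReal) ≤ fs n y :=
    (eventually_all.2 fun y => (hlim y).eventually_const_le
      ((EReal.coe_lt_coe_iff.2 (sub_lt_self _ hε)).trans_le (hu y))).exists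
  calc E (fun y => (u y : EReal)) ≤ E (fs n) + ε :=
        le_add_coe_of_le_add_coe h1 h2 h4 (hfs n) (BddBelowF.coe u) ε fun y =>
          calc (u y : EReal) = ((u y - ε : ℝ) : EReal) + ε := by
                rw [← EReal.coe_add, sub_add_cancel]
            _ ≤ fs n y + ε := by gcongr; exact hn y
    _ ≤ (⨆ n, E (fs n)) + ε := by gcongr; exact le_iSup (fun n => E (fs n)) n

lemma le_iSup_of_tendsto_of_map_top_mul [Finite Y] (h1 : UE1 E) (h2 : UE2 E) (h3 : UE3 E)
    (h4 : UE4 E) (h13 : ∀ f : Y → EReal, BddBelowF f → (∀ y, 0 ≤ f y) →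
      E (fun y => ⊤ * f y) = ⊤ * E f)
    {fs : ℕ → Y → EReal} {f : Y → EReal} (hfs : ∀ n, BddBelowF (fs n))
    (hlim : ∀ y, Tendsto (fun n => fs n y) atTop (𝓝 (f y))) (hf0 : ∀ y, 0 ≤ f y) :
    E f ≤ ⨆ n, E (fs n) := by
  have hf_ne_bot : ∀ y, f y ≠ ⊥ := fun y => (EReal.bot_lt_zero.trans_le (hf0 y)).ne'
  have hreal : ∀ u : Y → ℝ, (∀ y, (u y : EReal) ≤ f y) →
      E (fun y => (u y : EReal)) ≤ ⨆ n, E (fs n) :=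
    fun _ => le_iSup_of_coe_le_tendsto h1 h2 h4 hfs hlim
  -- `(f y).toReal = 0` where `f y = ⊤`; those points are covered by `⊤ * g`.
  set h : Y → ℝ := fun y => (f y).toReal
  set g : Y → ℝ := {y | f y = ⊤}.indicator 1
  have hg : ∀ y, (0 : EReal) ≤ g y := fun y =>
    EReal.coe_nonneg.2 (Set.indicator_nonneg (fun _ _ => zero_le_one) y)
  have hsplit : ∀ y, f y ≤ eadd (h y) (⊤ * g y) := by
    intro y
    by_cases hy : f y = ⊤
    · simp [g, hy, eadd_top]
    · simp [g, h, hy, eadd_zero, EReal.coe_toReal hy (hf_ne_bot y)]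
  have hng : ∀ n : ℕ, ((n : ℝ) : EReal) * E (fun y => (g y : EReal)) ≤ ⨆ n, E (fs n) := by
    intro n
    rw [← h3.natCast_mul h1 (BddBelowF.coe g)]
    simpa only [EReal.coe_mul] using hreal (fun y => n * g y) fun y => by
      by_cases hy : f y = ⊤ <;> simp [g, hy, hf0 y]
  calc E f ≤ E (fun y => eadd (h y) (⊤ * g y)) :=
        h4 _ _ (BddBelowF.of_nonneg hf0) ((BddBelowF.of_nonneg hf0).mono hsplit) hsplit
    _ ≤ eadd (E fun y => (h y : EReal)) (E fun y => ⊤ * g y) :=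
        h2 _ _ (BddBelowF.coe h) (BddBelowF.of_nonneg fun y => mul_nonneg le_top (hg y))
    _ = eadd (E fun y => (h y : EReal)) (⊤ * E fun y => (g y : EReal)) := by
        rw [h13 _ (BddBelowF.coe g) hg]
    _ ≤ ⨆ n, E (fs n) :=
        eadd_top_mul_le (hreal h fun y => EReal.coe_toReal_le (hf_ne_bot y))
          (le_of_tendsto' (EReal.tendsto_natCast_mul_top_mul _) hng)

lemma ue5_of_map_top_mul [Finite Y] (h1 : UE1 E) (h2 : UE2 E) (h3 : UE3 E) (h4 : UE4 E)
    (h13 : ∀ f : Y → EReal, BddBelowF f → (∀ y, 0 ≤ f y) →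
      E (fun y => ⊤ * f y) = ⊤ * E f) :
    UE5 E := by
  intro fs f h0 hstep hlim
  have hmono : ∀ y, Monotone fun n => fs n y := fun y => monotone_nat_of_le_succ (hstep · y)
  have hle : ∀ n y, fs n y ≤ f y := fun n y => (hmono y).ge_of_tendsto (hlim y) n
  have hfs : ∀ n, BddBelowF (fs n) := fun n => BddBelowF.of_nonneg (h0 n)
  have hf0 : ∀ y, 0 ≤ f y := fun y => (h0 0 y).trans (hle 0 y)
  have hEmono : Monotone fun n => E (fs n) :=
    fun m n hmn => h4 _ _ (hfs m) (hfs n) fun y => hmono y hmn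
  have hEf : E f = ⨆ n, E (fs n) :=
    le_antisymm (le_iSup_of_tendsto_of_map_top_mul h1 h2 h3 h4 h13 hfs hlim hf0)
      (iSup_le fun n => h4 _ _ (hfs n) (BddBelowF.of_nonneg hf0) (hle n))
  rw [hEf]
  exact tendsto_atTop_iSup hEmono

end UpperExpectation

theorem stmt2_general {Y : Type*} [Fintype Y]
    (E : (Y → EReal) → EReal) :
    IsUpperExpectation E ↔
      (UE1 E ∧ UE2 E ∧ UE3 E ∧ UE4 E ∧
        ∀ f : Y → EReal, BddBelowF f → (∀ y, 0 ≤ f y) →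
          E (fun y => (⊤ : EReal) * f y) = (⊤ : EReal) * E f) :=
  ⟨fun hE => ⟨hE.1, hE.2.1, hE.2.2.1, hE.2.2.2.1, fun _ hf hf0 => hE.map_top_mul hf hf0⟩,
    fun ⟨h1, h2, h3, h4, h13⟩ => ⟨h1, h2, h3, h4, ue5_of_map_top_mul h1 h2 h3 h4 h13⟩⟩

/-- for finite `Y`, a map on a domain `D` containing all bounded below
variables is an upper expectation if and only if it satisfies (E1)–(E4) together with (E13),
homogeneity with respect to multiplication by `+∞` on non-negative bounded below variables. -/
theorem stmt2 {Y : Type*} [Fintype Y] [Nonempty Y]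
    (D : Set (Y → EReal)) (hD : ∀ f, BddBelowF f → f ∈ D)
    (E : (Y → EReal) → EReal) :
    IsUpperExpectation E ↔
      (UE1 E ∧ UE2 E ∧ UE3 E ∧ UE4 E ∧
        ∀ f : Y → EReal, BddBelowF f → (∀ y, 0 ≤ f y) →
          E (fun y => (⊤ : EReal) * f y) = (⊤ : EReal) * E f) :=
  stmt2_general E
end
end

section
/- Let (M_n)_{n∈ℕ} be a countable collection of supermartingales admitting a common real lower bound B (i.e., M_n(s) ≥ B for all n and all situations s), and let (λ_n)_{n∈ℕ} be non-negative reals whose series converges to a real number λ = Σ_n λ_n. Then for every situation s the partial sums Σ_{n=0}^{N} λ_n·M_n(s) converge in ℝ̄ as N → ∞, and the process M defined by M(s) := lim_{N→∞} Σ_{n=0}^{N} λ_n·M_n(s) is a bounded below supermartingale; if moreover every M_n is non-negative, then so is M. -/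
open Filter Topology

noncomputable section

/-- The situation formed by the first `n` states of the path `ω`. -/
def pfx {X : Type*} (ω : ℕ → X) (n : ℕ) : List X := List.ofFn (fun i : Fin n => ω i)

/-- The cylinder event of all paths that go through the situation `s`. -/
def Gamma {X : Type*} (s : List X) : Set (ℕ → X) := {ω | pfx ω s.length = s}

/-- A process is bounded below. -/
def BddBelowP {X : Type*} (M : List X → EReal) : Prop := ∃ B : ℝ, ∀ t, (B : EReal) ≤ M t

/-- A supermartingale for the imprecise probabilities tree `Q`. -/
def IsSupermartingale {X : Type*} (Q : List X → (X → EReal) → EReal)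
    (M : List X → EReal) : Prop :=
  ∀ s : List X, Q s (fun x => M (s ++ [x])) ≤ M s

/-- The pathwise limit inferior of a process. -/
def liminfP {X : Type*} (M : List X → EReal) (ω : ℕ → X) : EReal :=
  Filter.liminf (fun n => M (pfx ω n)) atTop

/-- The game-theoretic upper expectation `E_V(f | s)`. -/
def upExp {X : Type*} (Q : List X → (X → EReal) → EReal)
    (f : (ℕ → X) → EReal) (s : List X) : EReal :=
  sInf {x : EReal | ∃ M : List X → EReal, IsSupermartingale Q M ∧ BddBelowP M ∧
    (∀ ω ∈ Gamma s, f ω ≤ liminfP M ω) ∧ M s = x}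

/-- An event `A` is strictly almost sure within `Γ(s)`: some `s`-test supermartingale
converges to `+∞` on every path of `Γ(s)` outside `A`. -/
def StrictlyAS {X : Type*} (Q : List X → (X → EReal) → EReal) (s : List X)
    (A : Set (ℕ → X)) : Prop :=
  ∃ T : List X → EReal, IsSupermartingale Q T ∧ (∀ t, 0 ≤ T t) ∧ T s = 1 ∧
    ∀ ω ∈ Gamma s, ω ∉ A → Tendsto (fun n => T (pfx ω n)) atTop (𝓝 (⊤ : EReal))

/-- An `n`-measurable global variable only depends on the first `n` states. -/
def NMeasurable {X : Type*} (n : ℕ) (f : (ℕ → X) → EReal) : Prop :=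
  ∀ ω ω' : ℕ → X, pfx ω n = pfx ω' n → f ω = f ω'

/-- A finitary global variable is `n`-measurable for some `n`. -/
def Finitary {X : Type*} (f : (ℕ → X) → EReal) : Prop := ∃ n : ℕ, NMeasurable n f

/-- The bounded below global variables that are pointwise limits of finitary variables. -/
def VbLim {X : Type*} : Set ((ℕ → X) → EReal) :=
  {f | BddBelowF f ∧ ∃ gs : ℕ → (ℕ → X) → EReal, (∀ n, Finitary (gs n)) ∧
    ∀ ω, Tendsto (fun n => gs n ω) atTop (𝓝 (f ω))}

/-!
Since (E5) only applies to non-decreasing sequences of non-negative variables, shift first: every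
`λₙ (Mₙ - B)` is a non-negative supermartingale, so the partial sums of the shifted series form a
non-decreasing sequence of non-negative supermartingales (by sub-additivity and homogeneity), whose
supremum is again a supermartingale by (E5). Adding back the constant `l B` recovers the limit of
the original partial sums.
-/

theorem EReal.coe_finset_sum {ι : Type*} (s : Finset ι) (f : ι → ℝ) :
    ((∑ i ∈ s, f i : ℝ) : EReal) = ∑ i ∈ s, (f i : EReal) :=
  map_sum (⟨⟨(↑), EReal.coe_zero⟩, EReal.coe_add⟩ : ℝ →+ EReal) f s

theorem EReal.coe_mul_eq_coe_mul_sub_add {c : ℝ} (hc : 0 ≤ c) {a : EReal} (ha : a ≠ ⊥) (b : ℝ) :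
    (c : EReal) * a = c * (a - b) + (c * b : ℝ) := by
  induction a using EReal.rec with
  | bot => exact absurd rfl ha
  | coe a => norm_cast; ring
  | top =>
    rcases hc.eq_or_lt with rfl | hc
    · simp
    · rw [EReal.top_sub_coe, EReal.mul_top_of_pos (EReal.coe_pos.2 hc), EReal.top_add_coe]

theorem EReal.sub_coe_nonneg {a : EReal} {b : ℝ} (h : (b : EReal) ≤ a) : 0 ≤ a - b :=
  (sub_nonneg (.inr (coe_ne_top b)) (.inr (coe_ne_bot b))).2 h

theorem EReal.monotone_sum_range_of_nonneg {f : ℕ → EReal} (hf : ∀ n, 0 ≤ f n) :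
    Monotone fun N => ∑ n ∈ Finset.range N, f n :=
  fun _ _ h => Finset.sum_le_sum_of_subset_of_nonneg (Finset.range_subset_range.2 h)
    fun n _ _ => hf n

theorem EReal.tendsto_sum_range_coe_mul {a : ℕ → EReal} {b : ℝ} (ha : ∀ n, (b : EReal) ≤ a n)
    {lam : ℕ → ℝ} (hlam : ∀ n, 0 ≤ lam n) {l : ℝ} (hsum : HasSum lam l) :
    Tendsto (fun N => ∑ n ∈ Finset.range N, (lam n : EReal) * a n) atTop
      (𝓝 ((⨆ N, ∑ n ∈ Finset.range N, (lam n : EReal) * (a n - b)) + (l * b : ℝ))) := by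
  have hsplit : ∀ N, ∑ n ∈ Finset.range N, (lam n : EReal) * a n =
      ∑ n ∈ Finset.range N, (lam n : EReal) * (a n - b) +
        (∑ n ∈ Finset.range N, lam n * b : ℝ) := by
    intro N
    rw [EReal.coe_finset_sum, ← Finset.sum_add_distrib]
    exact Finset.sum_congr rfl fun n _ =>
      coe_mul_eq_coe_mul_sub_add (hlam n) (ne_bot_of_le_ne_bot (coe_ne_bot b) (ha n)) b
  have hmono := monotone_sum_range_of_nonneg fun n =>
    mul_nonneg (EReal.coe_nonneg.2 (hlam n)) (sub_coe_nonneg (ha n))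
  simp only [hsplit]
  exact (continuousAt_add (.inr (coe_ne_bot _)) (.inr (coe_ne_top _))).tendsto.comp
    ((tendsto_atTop_iSup hmono).prodMk_nhds (tendsto_coe.2 (hsum.mul_right b).tendsto_sum_nat))

theorem eadd_eq_add {a b : EReal} (ha : a ≠ ⊥) (hb : b ≠ ⊥) : eadd a b = a + b := by
  unfold eadd
  split_ifs with h
  · rcases h with rfl | rfl
    · exact (EReal.top_add_of_ne_bot hb).symm
    · exact (EReal.add_top_of_ne_bot ha).symm
  · rfl

theorem BddBelowF.ne_bot {Y : Type*} {f : Y → EReal} (hf : BddBelowF f) (y : Y) : f y ≠ ⊥ :=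
  let ⟨m, hm⟩ := hf
  ne_bot_of_le_ne_bot (EReal.coe_ne_bot m) (hm y)

namespace IsUpperExpectation

variable {Y : Type*} {E : (Y → EReal) → EReal}

theorem coe_le (hE : IsUpperExpectation E) {f : Y → EReal} {m : ℝ}
    (hf : ∀ y, (m : EReal) ≤ f y) : (m : EReal) ≤ E f := by
  rw [← hE.1 m]
  exact hE.2.2.2.1 _ f ⟨m, fun _ => le_rfl⟩ ⟨m, hf⟩ hf

theorem ne_bot (hE : IsUpperExpectation E) {f : Y → EReal} (hf : BddBelowF f) : E f ≠ ⊥ :=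
  let ⟨m, hm⟩ := hf
  ne_bot_of_le_ne_bot (EReal.coe_ne_bot m) (hE.coe_le hm)

theorem add_le (hE : IsUpperExpectation E) {f g : Y → EReal} (hf : BddBelowF f)
    (hg : BddBelowF g) : E (f + g) ≤ E f + E g := by
  have h := hE.2.1 f g hf hg
  rwa [eadd_eq_add (hE.ne_bot hf) (hE.ne_bot hg),
    funext fun y => eadd_eq_add (hf.ne_bot y) (hg.ne_bot y)] at h

theorem coe_mul (hE : IsUpperExpectation E) {c : ℝ} (hc : 0 ≤ c) {f : Y → EReal}
    (hf : BddBelowF f) : E (fun y => (c : EReal) * f y) = c * E f := by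
  rcases hc.eq_or_lt with rfl | hc
  · simpa using hE.1 0
  · exact hE.2.2.1 c hc f hf

theorem tendsto_iSup (hE : IsUpperExpectation E) {fs : ℕ → Y → EReal} (h0 : ∀ n y, 0 ≤ fs n y)
    (hmono : ∀ y, Monotone fun n => fs n y) :
    Tendsto (fun n => E (fs n)) atTop (𝓝 (E fun y => ⨆ n, fs n y)) :=
  hE.2.2.2.2 fs _ h0 (fun n y => hmono y n.le_succ) fun y => tendsto_atTop_iSup (hmono y)

end IsUpperExpectation

theorem BddBelowP.bddBelowF_succ {X : Type*} {M : List X → EReal} (hM : BddBelowP M)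
    (s : List X) : BddBelowF fun x => M (s ++ [x]) :=
  let ⟨B, hB⟩ := hM
  ⟨B, fun x => hB (s ++ [x])⟩

theorem BddBelowP.add {X : Type*} {M N : List X → EReal} (hM : BddBelowP M)
    (hN : BddBelowP N) : BddBelowP (M + N) :=
  let ⟨m, hm⟩ := hM
  let ⟨k, hk⟩ := hN
  ⟨m + k, fun t => by rw [EReal.coe_add]; exact add_le_add (hm t) (hk t)⟩

namespace IsSupermartingale

variable {X : Type*} {Q : List X → (X → EReal) → EReal}

theorem const (hQ : ∀ s, IsUpperExpectation (Q s)) (c : ℝ) :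
    IsSupermartingale Q fun _ => (c : EReal) :=
  fun s => (hQ s).1 c |>.le

theorem add (hQ : ∀ s, IsUpperExpectation (Q s)) {M N : List X → EReal}
    (hM : IsSupermartingale Q M) (hN : IsSupermartingale Q N) (hMb : BddBelowP M)
    (hNb : BddBelowP N) : IsSupermartingale Q (M + N) := fun s =>
  ((hQ s).add_le (hMb.bddBelowF_succ s) (hNb.bddBelowF_succ s)).trans (add_le_add (hM s) (hN s))

theorem coe_mul (hQ : ∀ s, IsUpperExpectation (Q s)) {M : List X → EReal}
    (hM : IsSupermartingale Q M) (hMb : BddBelowP M) {c : ℝ} (hc : 0 ≤ c) :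
    IsSupermartingale Q fun t => (c : EReal) * M t := fun s => by
  rw [(hQ s).coe_mul hc (hMb.bddBelowF_succ s)]
  exact mul_le_mul_of_nonneg_left (hM s) (EReal.coe_nonneg.2 hc)

theorem finset_sum (hQ : ∀ s, IsUpperExpectation (Q s)) {ι : Type*} (F : Finset ι)
    {M : ι → List X → EReal} (hM : ∀ i, IsSupermartingale Q (M i))
    (h0 : ∀ i t, 0 ≤ M i t) : IsSupermartingale Q fun t => ∑ i ∈ F, M i t := by
  classical
  induction F using Finset.induction_on with
  | empty => simpa using const hQ 0
  | insert a F haF ih =>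
    simp only [Finset.sum_insert haF]
    exact add hQ (hM a) ih ⟨0, by simpa using h0 a⟩
      ⟨0, fun t => by simpa using Finset.sum_nonneg fun i _ => h0 i t⟩

theorem sub_const (hQ : ∀ s, IsUpperExpectation (Q s)) {M : List X → EReal}
    (hM : IsSupermartingale Q M) (hMb : BddBelowP M) (c : ℝ) :
    IsSupermartingale Q fun t => M t - c := by
  have h := add hQ hM (const hQ (-c)) hMb ⟨-c, fun _ => le_rfl⟩
  rw [EReal.coe_neg] at h
  exact h

theorem iSup (hQ : ∀ s, IsUpperExpectation (Q s)) {M : ℕ → List X → EReal}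
    (hM : ∀ n, IsSupermartingale Q (M n)) (h0 : ∀ n t, 0 ≤ M n t)
    (hmono : ∀ t, Monotone fun n => M n t) : IsSupermartingale Q fun t => ⨆ n, M n t :=
  fun s => le_of_tendsto
    ((hQ s).tendsto_iSup (fun n x => h0 n (s ++ [x])) fun x => hmono (s ++ [x]))
    (Eventually.of_forall fun n => (hM n s).trans (le_iSup (fun n => M n s) n))

end IsSupermartingale

theorem stmt4_general {X : Type*}
    (Q : List X → (X → EReal) → EReal) (hQ : ∀ s : List X, IsUpperExpectation (Q s))
    (M : ℕ → List X → EReal) (hM : ∀ n, IsSupermartingale Q (M n))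
    (B : ℝ) (hB : ∀ n t, (B : EReal) ≤ M n t)
    (lam : ℕ → ℝ) (hlam : ∀ n, 0 ≤ lam n) (l : ℝ) (hsum : HasSum lam l) :
    ∃ S : List X → EReal,
      (∀ t, Tendsto (fun N => ∑ n ∈ Finset.range N, ((lam n : EReal) * M n t))
        atTop (𝓝 (S t))) ∧
      IsSupermartingale Q S ∧ BddBelowP S ∧
      ((∀ n t, 0 ≤ M n t) → ∀ t, 0 ≤ S t) := by
  have hshift_nonneg : ∀ n t, 0 ≤ M n t - B := fun n t => EReal.sub_coe_nonneg (hB n t)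
  have hterm_nonneg : ∀ n t, 0 ≤ (lam n : EReal) * (M n t - B) := fun n t =>
    mul_nonneg (EReal.coe_nonneg.2 (hlam n)) (hshift_nonneg n t)
  have hterm : ∀ n, IsSupermartingale Q fun t => (lam n : EReal) * (M n t - B) := fun n =>
    ((hM n).sub_const hQ ⟨B, hB n⟩ B).coe_mul hQ ⟨0, by simpa using hshift_nonneg n⟩ (hlam n)
  set T : List X → EReal := fun t => ⨆ N, ∑ n ∈ Finset.range N, (lam n : EReal) * (M n t - B)
  have hT_nonneg : ∀ t, 0 ≤ T t := fun t =>
    le_iSup_of_le 0 (Finset.sum_nonneg fun n _ => hterm_nonneg n t)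
  have hT : IsSupermartingale Q T :=
    IsSupermartingale.iSup hQ (fun N => .finset_sum hQ _ hterm hterm_nonneg)
      (fun N t => Finset.sum_nonneg fun n _ => hterm_nonneg n t)
      fun t => EReal.monotone_sum_range_of_nonneg fun n => hterm_nonneg n t
  have hTb : BddBelowP T := ⟨0, by simpa using hT_nonneg⟩
  have hconst : BddBelowP fun _ : List X => ((l * B : ℝ) : EReal) := ⟨l * B, fun _ => le_rfl⟩
  set S : List X → EReal := T + fun _ => ((l * B : ℝ) : EReal)
  have hlim : ∀ t, Tendsto (fun N => ∑ n ∈ Finset.range N, (lam n : EReal) * M n t) atTop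
      (𝓝 (S t)) := fun t =>
    EReal.tendsto_sum_range_coe_mul (hB · t) hlam hsum
  refine ⟨S, hlim, hT.add hQ (.const hQ _) hTb hconst, hTb.add hconst, fun h0 t => ?_⟩
  exact ge_of_tendsto' (hlim t) fun N => Finset.sum_nonneg fun n _ =>
    mul_nonneg (EReal.coe_nonneg.2 (hlam n)) (h0 n t)

/-- countable non-negative convex-type combinations of supermartingales with a
common real lower bound converge and yield a bounded below supermartingale, which is
non-negative whenever all the supermartingales involved are non-negative. -/
theorem stmt4 {X : Type*} [Fintype X] [Nonempty X]
    (Q : List X → (X → EReal) → EReal) (hQ : ∀ s : List X, IsUpperExpectation (Q s))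
    (M : ℕ → List X → EReal) (hM : ∀ n, IsSupermartingale Q (M n))
    (B : ℝ) (hB : ∀ n t, (B : EReal) ≤ M n t)
    (lam : ℕ → ℝ) (hlam : ∀ n, 0 ≤ lam n) (l : ℝ) (hsum : HasSum lam l) :
    ∃ S : List X → EReal,
      (∀ t, Tendsto (fun N => ∑ n ∈ Finset.range N, ((lam n : EReal) * M n t))
        atTop (𝓝 (S t))) ∧
      IsSupermartingale Q S ∧ BddBelowP S ∧
      ((∀ n t, 0 ≤ M n t) → ∀ t, 0 ≤ S t) :=
  stmt4_general Q hQ M hM B hB lam hlam l hsum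
end
end

section
/- For every bounded below global variable f : Ω → ℝ̄, the process P defined by P(s) := E_V(f|s) for every situation s is a bounded below supermartingale. -/
open Filter Topology

noncomputable section

lemma pfx_succ' {X : Type*} (ω : ℕ → X) (n : ℕ) :
    pfx ω (n + 1) = pfx ω n ++ [ω n] := by
  rw [pfx, List.ofFn_succ']
  simp [pfx, Fin.last, List.concat_eq_append]

lemma exists_child {X : Type*} [Fintype X] [Nonempty X]
    {Q : List X → (X → EReal) → EReal}
    (hQ : ∀ s : List X, IsUpperExpectation (Q s)) {M : List X → EReal}
    (hM : IsSupermartingale Q M) {B : ℝ} (hB : ∀ t, (B : EReal) ≤ M t)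
    (s : List X) : ∃ x : X, M (s ++ [x]) ≤ M s := by
  obtain ⟨hE1, hE2, hE3, hE4, hE5⟩ := hQ s
  obtain ⟨x₀, -, hx₀⟩ := Finset.exists_min_image Finset.univ (fun x => M (s ++ [x]))
    ⟨Classical.arbitrary X, Finset.mem_univ _⟩
  have hbdd : BddBelowF (fun x : X => M (s ++ [x])) := ⟨B, fun x => hB _⟩
  have key : ∀ r : ℝ, (∀ x : X, (r : EReal) ≤ M (s ++ [x])) → (r : EReal) ≤ M s := by
    intro r hr
    calc (r : EReal) = Q s (fun _ => (r : EReal)) := (hE1 r).symm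
      _ ≤ Q s (fun x => M (s ++ [x])) := hE4 _ _ ⟨r, fun _ => le_refl _⟩ hbdd hr
      _ ≤ M s := hM s
  by_cases htop : M (s ++ [x₀]) = ⊤
  · have hall : ∀ x, M (s ++ [x]) = ⊤ :=
      fun x => top_le_iff.mp (htop ▸ hx₀ x (Finset.mem_univ x))
    have hMs : M s = ⊤ := by
      by_contra h
      obtain ⟨r, hr1, -⟩ := EReal.lt_iff_exists_real_btwn.mp (lt_top_iff_ne_top.mpr h)
      exact absurd (key r (fun x => by simp [hall x])) (not_le.mpr hr1)
    exact ⟨x₀, by simp [hall x₀, hMs]⟩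
  · refine ⟨x₀, ?_⟩
    have hne : M (s ++ [x₀]) ≠ ⊥ := fun h => by simpa [h] using hB (s ++ [x₀])
    have hc : ((M (s ++ [x₀])).toReal : EReal) = M (s ++ [x₀]) := EReal.coe_toReal htop hne
    calc M (s ++ [x₀]) = ((M (s ++ [x₀])).toReal : EReal) := hc.symm
      _ ≤ M s := key _ (fun x => hc.trans_le (hx₀ x (Finset.mem_univ x)))

lemma lower_bound {X : Type*} [Fintype X] [Nonempty X]
    {Q : List X → (X → EReal) → EReal}
    (hQ : ∀ s : List X, IsUpperExpectation (Q s)) {M : List X → EReal}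
    (hM : IsSupermartingale Q M) {B' : ℝ} (hB : ∀ t, (B' : EReal) ≤ M t)
    (t : List X) {B : ℝ}
    (hf : ∀ ω ∈ Gamma t, (B : EReal) ≤ liminfP M ω) : (B : EReal) ≤ M t := by
  choose pick hpick using exists_child hQ hM hB
  set l : ℕ → List X := fun k => Nat.rec t (fun _ u => u ++ [pick u]) k with hl
  have hl0 : l 0 = t := rfl
  have hlsucc : ∀ k, l (k + 1) = l k ++ [pick (l k)] := fun k => rfl
  have hlen : ∀ k, (l k).length = t.length + k := by
    intro k; induction k with
    | zero => simp [hl0]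
    | succ k ih => simp [hlsucc, ih]; omega
  have hMl : ∀ k, M (l k) ≤ M t := by
    intro k; induction k with
    | zero => simp [hl0]
    | succ k ih => exact le_trans (hlsucc k ▸ hpick (l k)) ih
  set ω : ℕ → X := fun n =>
    if h : n < t.length then t.get ⟨n, h⟩ else pick (l (n - t.length)) with hω
  have hpfx : ∀ k, pfx ω (t.length + k) = l k := by
    intro k; induction k with
    | zero =>
      simp only [Nat.add_zero, hl0]
      apply List.ext_getElem
      · simp [pfx]
      · intro i h1 h2
        simp only [pfx, List.getElem_ofFn]
        have : i < t.length := h2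
        simp [hω, this]
    | succ k ih =>
      have : t.length + (k + 1) = (t.length + k) + 1 := rfl
      rw [this, pfx_succ', ih, hlsucc]
      congr 1
      have h1 : ¬ t.length + k < t.length := by omega
      have h2 : t.length + k - t.length = k := by omega
      simp [hω, h1, h2]
  have hGamma : ω ∈ Gamma t := by
    have := hpfx 0
    simpa [Gamma, hl0] using this
  have hliminf : liminfP M ω ≤ M t := by
    apply Filter.liminf_le_of_frequently_le'
    apply Filter.Eventually.frequently
    filter_upwards [Filter.eventually_ge_atTop t.length] with n hn
    have heq : t.length + (n - t.length) = n := by omega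
    have h3 := hpfx (n - t.length)
    rw [heq] at h3
    rw [h3]; exact hMl _
  exact le_trans (hf ω hGamma) hliminf

/-- for any bounded below global variable `f`, the process
`s ↦ E_V(f|s)` is a bounded below supermartingale. -/
theorem stmt8 {X : Type*} [Fintype X] [Nonempty X]
    (Q : List X → (X → EReal) → EReal) (hQ : ∀ s : List X, IsUpperExpectation (Q s))
    (f : (ℕ → X) → EReal) (hf : BddBelowF f) :
    IsSupermartingale Q (fun t => upExp Q f t) ∧ BddBelowP (fun t => upExp Q f t) := by
  obtain ⟨B, hB⟩ := hf
  have hbP : ∀ t, (B : EReal) ≤ upExp Q f t := by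
    intro t
    apply le_sInf
    rintro x ⟨M, hM, ⟨B', hB'⟩, hdom, rfl⟩
    exact lower_bound hQ hM hB' t (fun ω hω => le_trans (hB ω) (hdom ω hω))
  refine ⟨?_, ⟨B, hbP⟩⟩
  intro s
  apply le_sInf
  rintro m ⟨M, hM, ⟨B', hB'⟩, hdom, rfl⟩
  have h1 : ∀ x : X, upExp Q f (s ++ [x]) ≤ M (s ++ [x]) := by
    intro x
    apply sInf_le
    refine ⟨M, hM, ⟨B', hB'⟩, fun ω hω => hdom ω ?_, rfl⟩
    have hω' : pfx ω (s.length + 1) = s ++ [x] := by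
      have : (s ++ [x]).length = s.length + 1 := by simp
      simpa [Gamma, this] using hω
    rw [pfx_succ'] at hω'
    have := (List.append_inj' hω' (by simp)).1
    simpa [Gamma] using this
  have h2 := (hQ s).2.2.2.1 (fun x => upExp Q f (s ++ [x])) (fun x => M (s ++ [x]))
    ⟨B, fun x => hbP _⟩ ⟨B', fun x => hB' _⟩ h1
  exact h2.trans (hM s)
end
end
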